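/- Let R be an integral domain, P ∈ R[x_1,…,x_N] a nonzero polynomial of sparsity σ, and d ≥ 1. Then P(X+a) has at least σ monomials for every vector a ∈ R^N if and only if Q_d(Y_d + a_d) has at least σ^d monomials for every vector a_d ∈ R^{d·N}. -/

import Mathlib

open MvPolynomial Finset

/-- The shift of a multivariate polynomial by a vector `a`: the image of `f` under the
`R`-algebra endomorphism sending each variable `x_i` to `x_i + a_i`. -/
noncomputable def shift {R : Type*} [CommRing R] {σ : Type*} (a : σ → R)
    (f : MvPolynomial σ R) : MvPolynomial σ R :=
  MvPolynomial.aeval (fun i => MvPolynomial.X i + MvPolynomial.C (a i)) f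

/-- `Qd d P` is the product of `d` copies of `P` in pairwise disjoint sets of variables:
`Q_d = ∏_{k=1}^d rename_k(P)`, where `rename_k` substitutes `x_{k,i}` for `x_i`. -/
noncomputable def Qd {R : Type*} [CommRing R] {N : ℕ} (d : ℕ)
    (P : MvPolynomial (Fin N) R) : MvPolynomial (Fin d × Fin N) R :=
  ∏ k : Fin d, MvPolynomial.rename (fun i => (k, i)) P



section Aux
variable {R : Type*} [CommRing R] [IsDomain R] {τ : Type*}

private lemma add_inj {A B : Set τ} (hAB : Disjoint A B)
    {m m' n n' : τ →₀ ℕ} (hm : ↑m.support ⊆ A) (hm' : ↑m'.support ⊆ A)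
    (hn : ↑n.support ⊆ B) (hn' : ↑n'.support ⊆ B) (h : m + n = m' + n') :
    m = m' ∧ n = n' := by
  have key : ∀ a, m a = m' a ∧ n a = n' a := by
    intro a
    have h1 := DFunLike.congr_fun h a
    simp only [Finsupp.add_apply] at h1
    by_cases ha : a ∈ A
    · have hna : n a = 0 := by
        by_contra h'
        exact Set.disjoint_left.mp hAB ha (hn (Finsupp.mem_support_iff.2 h'))
      have hna' : n' a = 0 := by
        by_contra h'
        exact Set.disjoint_left.mp hAB ha (hn' (Finsupp.mem_support_iff.2 h'))
      omega
    · have hma : m a = 0 := by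
        by_contra h'; exact ha (hm (Finsupp.mem_support_iff.2 h'))
      have hma' : m' a = 0 := by
        by_contra h'; exact ha (hm' (Finsupp.mem_support_iff.2 h'))
      omega
  exact ⟨Finsupp.ext fun a => (key a).1, Finsupp.ext fun a => (key a).2⟩

private lemma card_support_mul {A B : Set τ} (hAB : Disjoint A B)
    {f g : MvPolynomial τ R}
    (hf : ∀ m ∈ f.support, ↑m.support ⊆ A)
    (hg : ∀ m ∈ g.support, ↑m.support ⊆ B) :
    (f * g).support.card = f.support.card * g.support.card := by
  classical
  have hcoeff : ∀ m ∈ f.support, ∀ n ∈ g.support,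
      (f * g).coeff (m + n) = f.coeff m * g.coeff n := by
    intro m hm n hn
    rw [MvPolynomial.coeff_mul]
    refine Finset.sum_eq_single_of_mem (m, n) (Finset.HasAntidiagonal.mem_antidiagonal.2 rfl) ?_
    rintro ⟨u, v⟩ huv hne
    by_contra h0
    have hu : u ∈ f.support := MvPolynomial.mem_support_iff.2 fun h => h0 (by rw [h, zero_mul])
    have hv : v ∈ g.support := MvPolynomial.mem_support_iff.2 fun h => h0 (by rw [h, mul_zero])
    obtain ⟨h1, h2⟩ := add_inj hAB (hf u hu) (hf m hm) (hg v hv) (hg n hn)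
      (Finset.HasAntidiagonal.mem_antidiagonal.1 huv)
    exact hne (by rw [h1, h2])
  have hsupp : (f * g).support = (f.support ×ˢ g.support).image fun p => p.1 + p.2 := by
    ext p
    simp only [Finset.mem_image, Finset.mem_product, MvPolynomial.mem_support_iff, Prod.exists]
    constructor
    · intro hp
      rw [MvPolynomial.coeff_mul] at hp
      obtain ⟨⟨u, v⟩, huv, h0⟩ := Finset.exists_ne_zero_of_sum_ne_zero hp
      exact ⟨u, v, ⟨fun h => h0 (by rw [h, zero_mul]), fun h => h0 (by rw [h, mul_zero])⟩,
        Finset.HasAntidiagonal.mem_antidiagonal.1 huv⟩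
    · rintro ⟨u, v, ⟨hu, hv⟩, rfl⟩
      rw [hcoeff u (MvPolynomial.mem_support_iff.2 hu) v (MvPolynomial.mem_support_iff.2 hv)]
      exact mul_ne_zero hu hv
  rw [hsupp, Finset.card_image_of_injOn, Finset.card_product]
  rintro ⟨u, v⟩ huv ⟨u', v'⟩ huv' h
  simp only [Finset.mem_coe, Finset.mem_product] at huv huv'
  obtain ⟨h1, h2⟩ := add_inj hAB (hf _ huv.1) (hf _ huv'.1) (hg _ huv.2) (hg _ huv'.2) h
  exact Prod.ext h1 h2

private lemma card_support_prod_finset {d N : ℕ} (f : Fin d → MvPolynomial (Fin N) R)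
    (s : Finset (Fin d)) :
    (∏ k ∈ s, MvPolynomial.rename (fun i => (k, i)) (f k)).support.card
      = ∏ k ∈ s, (f k).support.card := by
  classical
  induction s using Finset.induction with
  | empty =>
    rw [Finset.prod_empty, Finset.prod_empty, show (1 : MvPolynomial (Fin d × Fin N) R) = MvPolynomial.monomial 0 1 by simp]
    rw [MvPolynomial.support_monomial, if_neg one_ne_zero, Finset.card_singleton]
  | @insert a s ha ih =>
    rw [Finset.prod_insert ha, Finset.prod_insert ha, ← ih]
    have hA : ∀ m ∈ (MvPolynomial.rename (fun i => (a, i)) (f a)).support,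
        ↑m.support ⊆ {p : Fin d × Fin N | p.1 = a} := by
      intro m hm p hp
      have hv : p ∈ (MvPolynomial.rename (fun i => (a, i)) (f a)).vars :=
        (MvPolynomial.mem_vars _).2 ⟨m, hm, hp⟩
      obtain ⟨i, _, rfl⟩ := MvPolynomial.mem_vars_rename _ _ hv
      rfl
    have hB : ∀ m ∈ (∏ k ∈ s, MvPolynomial.rename (fun i => (k, i)) (f k)).support,
        ↑m.support ⊆ {p : Fin d × Fin N | p.1 ∈ s} := by
      intro m hm p hp
      have hv : p ∈ (∏ k ∈ s, MvPolynomial.rename (fun i => (k, i)) (f k)).vars :=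
        (MvPolynomial.mem_vars _).2 ⟨m, hm, hp⟩
      have := MvPolynomial.vars_prod (s := s)
        (fun k => MvPolynomial.rename (fun i => (k, i)) (f k)) hv
      obtain ⟨k, hk, hpk⟩ := Finset.mem_biUnion.1 this
      obtain ⟨i, _, rfl⟩ := MvPolynomial.mem_vars_rename _ _ hpk
      exact hk
    have hdisj : Disjoint {p : Fin d × Fin N | p.1 = a} {p : Fin d × Fin N | p.1 ∈ s} := by
      rw [Set.disjoint_left]
      rintro p (rfl : p.1 = a) (hp : p.1 ∈ s)
      exact ha hp
    rw [card_support_mul hdisj hA hB]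
    congr 1
    rw [MvPolynomial.support_rename_of_injective
      (fun i j h => (Prod.mk.injEq _ _ _ _ ▸ h).2)]
    exact Finset.card_image_of_injective _
      (Finsupp.mapDomain_injective fun i j h => (Prod.mk.injEq _ _ _ _ ▸ h).2)
end Aux

section Shift
variable {R : Type*} [CommRing R]

private lemma shift_shift {σ : Type*} (a b : σ → R) (f : MvPolynomial σ R) :
    shift a (shift b f) = shift (a + b) f := by
  have hfun : (fun i => (MvPolynomial.aeval fun j : σ => MvPolynomial.X j + MvPolynomial.C (a j))
      (MvPolynomial.X i + MvPolynomial.C (b i)))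
      = fun i : σ => MvPolynomial.X i + MvPolynomial.C ((a + b) i) := by
    funext i
    simp [map_add, add_assoc]
  simp only [shift, MvPolynomial.comp_aeval_apply, hfun]

private lemma shift_ne_zero {σ : Type*} (a : σ → R) {f : MvPolynomial σ R} (hf : f ≠ 0) :
    shift a f ≠ 0 := by
  intro h
  apply hf
  have := congrArg (shift (-a)) h
  rw [shift_shift, neg_add_cancel] at this
  simpa [shift, MvPolynomial.aeval_X_left_apply] using this

private lemma shift_rename {d N : ℕ} (a : Fin d × Fin N → R) (k : Fin d)
    (P : MvPolynomial (Fin N) R) :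
    shift a (MvPolynomial.rename (fun i => (k, i)) P)
      = MvPolynomial.rename (fun i => (k, i)) (shift (fun i => a (k, i)) P) := by
  have hfun : (fun i => (MvPolynomial.rename fun j : Fin N => (k, j))
      (MvPolynomial.X i + MvPolynomial.C (a (k, i))))
      = fun i : Fin N => (MvPolynomial.X (k, i) : MvPolynomial (Fin d × Fin N) R)
          + MvPolynomial.C (a (k, i)) := by
    funext i
    simp
  rw [shift, MvPolynomial.aeval_rename, shift, MvPolynomial.comp_aeval_apply, hfun]
  rfl

private lemma shift_Qd {d N : ℕ} (a : Fin d × Fin N → R) (P : MvPolynomial (Fin N) R) :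
    shift a (Qd d P)
      = ∏ k : Fin d, MvPolynomial.rename (fun i => (k, i)) (shift (fun i => a (k, i)) P) := by
  simp only [Qd, shift, map_prod]
  exact Finset.prod_congr rfl fun k _ => shift_rename a k P
end Shift

/-- **Lemma 4.1(5):** over an integral domain `R`, for a nonzero `P ∈ R[x_1,…,x_N]` of
sparsity `σ` and `d ≥ 1`: `P(X+a)` has at least `σ` monomials for every `a ∈ R^N` if and
only if `Q_d(Y_d+a_d)` has at least `σ^d` monomials for every `a_d ∈ R^{d·N}`. -/
theorem no_sparsifying_shift_iff_Qd {R : Type*} [CommRing R] [IsDomain R] {N : ℕ}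
    (P : MvPolynomial (Fin N) R) (hP : P ≠ 0) (σ : ℕ) (hσ : P.support.card = σ)
    (d : ℕ) (hd : 1 ≤ d) :
    (∀ a : Fin N → R, σ ≤ (shift a P).support.card)
      ↔ (∀ ad : Fin d × Fin N → R, σ ^ d ≤ (shift ad (Qd d P)).support.card) := by
  constructor
  · intro h ad
    rw [shift_Qd, card_support_prod_finset]
    calc σ ^ d = ∏ _k : Fin d, σ := by simp
    _ ≤ ∏ k : Fin d, (shift (fun i => ad (k, i)) P).support.card :=
        Finset.prod_le_prod' fun k _ => h _
  · intro h a
    by_contra hlt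
    push_neg at hlt
    have := h fun p => a p.2
    rw [shift_Qd, card_support_prod_finset] at this
    simp only [Finset.prod_const, Finset.card_univ, Fintype.card_fin] at this
    rw [show (fun i => a i) = a from rfl] at this
    have hpow : (shift a P).support.card ^ d < σ ^ d :=
      Nat.pow_lt_pow_left hlt (by omega)
    omega
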